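/- Let τ ∈ ℂ ∖ {0}, λ ∈ ℂ, and let f = (f_1, …, f_p) ∈ (ℂ^m)^p satisfy K_p(τ) f = λ f. Set f_0 = τ^{-1} f_p. Then the vector (f_0, f_1) ∈ ℂ^{2m} satisfies M_p(λ) (f_0, f_1)ᵀ = τ (f_0, f_1)ᵀ. Moreover, the linear map sending f to (f_0, f_1) is injective on the λ-eigenspace of K_p(τ); in particular, if f ≠ 0 then (f_0, f_1) ≠ 0. -/

import Mathlib

open Matrix ComplexOrder

/-- The `pm × pm` block matrix `K_p(τ)` (blocks indexed by `Fin p`, entries inside a block by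
`Fin m`; block row/column `j : Fin p` corresponds to the `1`-based index `j+1`):
the `j`-th diagonal block is `b_j`, the `(j, j+1)` and `(j+1, j)` blocks are `a_j` for
`j = 1, …, p−1`, the `(1, p)` block is `τ⁻¹ a_p`, the `(p, 1)` block is `τ a_p`, and the
remaining blocks vanish (for `p = 2` the overlapping contributions add up). -/
noncomputable def Kmat (p m : ℕ) (a b : ℕ → Matrix (Fin m) (Fin m) ℂ) (τ : ℂ) :
    Matrix (Fin p × Fin m) (Fin p × Fin m) ℂ :=
  Matrix.of fun x y =>
    (if (x.1 : ℕ) = (y.1 : ℕ) then b ((x.1 : ℕ) + 1) x.2 y.2 else 0)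
    + (if (y.1 : ℕ) = (x.1 : ℕ) + 1 then a ((x.1 : ℕ) + 1) x.2 y.2 else 0)
    + (if (x.1 : ℕ) = (y.1 : ℕ) + 1 then a ((y.1 : ℕ) + 1) x.2 y.2 else 0)
    + (if (x.1 : ℕ) = 0 ∧ (y.1 : ℕ) = p - 1 then τ⁻¹ * a p x.2 y.2 else 0)
    + (if (x.1 : ℕ) = p - 1 ∧ (y.1 : ℕ) = 0 then τ * a p x.2 y.2 else 0)

/-- The matrix-valued solution `(y_n)_{n ∈ ℕ}` of the Jacobi recursion
`a_n y_{n+1} + b_n y_n + a_{n−1} y_{n−1} = z y_n` (for `n ≥ 1`) with initial data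
`y_0, y_1` (here `a, b : ℕ → _` are the `p`-periodic coefficient sequences, so that
`a 0 = a p`, etc.). -/
noncomputable def sol {m : ℕ} (a b : ℕ → Matrix (Fin m) (Fin m) ℂ) (z : ℂ)
    (y0 y1 : Matrix (Fin m) (Fin m) ℂ) : ℕ → Matrix (Fin m) (Fin m) ℂ
  | 0 => y0
  | 1 => y1
  | n + 2 =>
      (a (n + 1))⁻¹ *
        (z • sol a b z y0 y1 (n + 1) - b (n + 1) * sol a b z y0 y1 (n + 1)
          - a n * sol a b z y0 y1 n)

/-- The fundamental solution `φ_n(z)` with `φ_0 = 0`, `φ_1 = I_m`. -/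
noncomputable def phi {m : ℕ} (a b : ℕ → Matrix (Fin m) (Fin m) ℂ) (z : ℂ) :
    ℕ → Matrix (Fin m) (Fin m) ℂ :=
  sol a b z 0 1

/-- The fundamental solution `ϑ_n(z)` with `ϑ_0 = I_m`, `ϑ_1 = 0`. -/
noncomputable def theta {m : ℕ} (a b : ℕ → Matrix (Fin m) (Fin m) ℂ) (z : ℂ) :
    ℕ → Matrix (Fin m) (Fin m) ℂ :=
  sol a b z 1 0

/-- The `2m × 2m` monodromy matrix `M_p(z) = [[ϑ_p(z), φ_p(z)], [ϑ_{p+1}(z), φ_{p+1}(z)]]`. -/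
noncomputable def Mmat (p : ℕ) {m : ℕ} (a b : ℕ → Matrix (Fin m) (Fin m) ℂ) (z : ℂ) :
    Matrix (Fin m ⊕ Fin m) (Fin m ⊕ Fin m) ℂ :=
  Matrix.fromBlocks (theta a b z p) (phi a b z p) (theta a b z (p + 1)) (phi a b z (p + 1))

/-- The linear map sending `f = (f_1, …, f_p) ∈ (ℂ^m)^p` to `(f_0, f_1) ∈ ℂ^{2m}`, where
`f_0 = τ⁻¹ f_p` (the first summand is `f_0`, the second is `f_1`). -/
noncomputable def extract (p m : ℕ) (hp : 2 ≤ p) (τ : ℂ) (f : Fin p × Fin m → ℂ) :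
    Fin m ⊕ Fin m → ℂ :=
  Sum.elim (fun i => τ⁻¹ * f (⟨p - 1, by omega⟩, i)) (fun i => f (⟨0, by omega⟩, i))

/-!
Extend an eigenvector `f` of `K_p(τ)` by `f_0 = τ⁻¹ f_p` and `f_{p+1} = τ f_1`. The block rows of
`K_p(τ) f = λ f` then say exactly that `(f_n)_{0 ≤ n ≤ p+1}` solves the Jacobi recursion at the
sites `1, …, p`, the corner blocks `τ^{∓1} a_p` supplying the terms `a_0 f_0` and `a_p f_{p+1}`.
Since every `a_n` is invertible, such a solution is `f_n = ϑ_n(λ) f_0 + φ_n(λ) f_1`; hence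
`M_p(λ) (f_0, f_1) = (f_p, f_{p+1}) = τ (f_0, f_1)`, and `f` is determined by `(f_0, f_1)`.
-/

section JacobiRecursion

variable {m : ℕ} {a b : ℕ → Matrix (Fin m) (Fin m) ℂ} {z : ℂ}

theorem mul_sol_add_two {n : ℕ} (ha : IsUnit (a (n + 1))) (y₀ y₁ : Matrix (Fin m) (Fin m) ℂ) :
    a (n + 1) * sol a b z y₀ y₁ (n + 2)
      = z • sol a b z y₀ y₁ (n + 1) - b (n + 1) * sol a b z y₀ y₁ (n + 1)
        - a n * sol a b z y₀ y₁ n :=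
  Matrix.mul_nonsing_inv_cancel_left _ _ ((Matrix.isUnit_iff_isUnit_det _).mp ha)

/-- `u` solves the Jacobi recursion at the sites `1, …, N`. -/
def IsJacobiSolution (a b : ℕ → Matrix (Fin m) (Fin m) ℂ) (z : ℂ) (N : ℕ)
    (u : ℕ → Fin m → ℂ) : Prop :=
  ∀ n < N, a (n + 1) *ᵥ u (n + 2) + b (n + 1) *ᵥ u (n + 1) + a n *ᵥ u n = z • u (n + 1)

theorem IsJacobiSolution.eq_theta_mulVec_add_phi_mulVec (ha : ∀ n, IsUnit (a n)) {N : ℕ}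
    {u : ℕ → Fin m → ℂ} (hu : IsJacobiSolution a b z N u) :
    ∀ n ≤ N + 1, u n = theta a b z n *ᵥ u 0 + phi a b z n *ᵥ u 1 := by
  intro n
  induction n using Nat.twoStepInduction with
  | zero => simp [theta, phi, sol]
  | one => simp [theta, phi, sol]
  | more n ih₀ ih₁ =>
    intro hn
    apply Matrix.mulVec_injective_iff_isUnit.mpr (ha (n + 1))
    have hstep := hu n (by omega)
    rw [ih₀ (by omega), ih₁ (by omega)] at hstep
    simp only [theta, phi] at hstep ⊢
    simp only [Matrix.mulVec_add, Matrix.mulVec_mulVec, mul_sol_add_two (ha (n + 1)),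
      Matrix.sub_mulVec, Matrix.smul_mulVec, smul_add] at hstep ⊢
    linear_combination hstep

theorem IsJacobiSolution.Mmat_mulVec_sum_elim (ha : ∀ n, IsUnit (a n)) {N : ℕ}
    {u : ℕ → Fin m → ℂ} (hu : IsJacobiSolution a b z N u) :
    Mmat N a b z *ᵥ Sum.elim (u 0) (u 1) = Sum.elim (u N) (u (N + 1)) := by
  rw [Mmat, Matrix.fromBlocks_mulVec, Sum.elim_comp_inl, Sum.elim_comp_inr,
    ← hu.eq_theta_mulVec_add_phi_mulVec ha N N.le_succ,
    ← hu.eq_theta_mulVec_add_phi_mulVec ha (N + 1) le_rfl]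

theorem IsJacobiSolution.eq_of_initial_eq (ha : ∀ n, IsUnit (a n)) {N : ℕ}
    {u v : ℕ → Fin m → ℂ} (hu : IsJacobiSolution a b z N u) (hv : IsJacobiSolution a b z N v)
    (h₀ : u 0 = v 0) (h₁ : u 1 = v 1) {n : ℕ} (hn : n ≤ N + 1) : u n = v n := by
  rw [hu.eq_theta_mulVec_add_phi_mulVec ha n hn, hv.eq_theta_mulVec_add_phi_mulVec ha n hn,
    h₀, h₁]

end JacobiRecursion

theorem Fin.sum_ite_val_eq {M : Type*} [AddCommMonoid M] {p : ℕ} (c : ℕ) (F : ℕ → M)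
    (hF : p ≤ c → F c = 0) :
    ∑ k : Fin p, (if (k : ℕ) = c then F k else 0) = F c := by
  rw [Fin.sum_univ_eq_sum_range (fun k => if k = c then F k else 0), Finset.sum_ite_eq']
  split_ifs with h
  · rfl
  · exact (hF (by simpa using h)).symm

theorem Fin.sum_ite_eq_val_add_one {M : Type*} [AddCommMonoid M] {p : ℕ} (c : ℕ) (F : ℕ → M)
    (hF : F 0 = 0) (hc : c ≤ p) :
    ∑ k : Fin p, (if c = (k : ℕ) + 1 then F (k + 1) else 0) = F c := by
  rcases c with _ | c
  · simp [hF]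
  · simp only [Nat.add_right_cancel_iff, @eq_comm ℕ c]
    exact Fin.sum_ite_val_eq c (fun k => F (k + 1)) (by omega)

section Floquet

variable {p m : ℕ}

/-- The block `f_n` of `f`, indexed from `1` as in `K_p(τ)`, and `0` outside `1, …, p`. -/
def blockSeq (f : Fin p × Fin m → ℂ) (n : ℕ) : Fin m → ℂ :=
  fun i => if h : 0 < n ∧ n ≤ p then f (⟨n - 1, by omega⟩, i) else 0

@[simp] theorem blockSeq_zero (f : Fin p × Fin m → ℂ) : blockSeq f 0 = 0 := by
  funext i; simp [blockSeq]

theorem blockSeq_of_lt (f : Fin p × Fin m → ℂ) {n : ℕ} (hn : p < n) : blockSeq f n = 0 := by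
  funext i; simp [blockSeq]; omega

theorem blockSeq_val_add_one (f : Fin p × Fin m → ℂ) (j : Fin p) (i : Fin m) :
    blockSeq f (j + 1) i = f (j, i) := by
  simp [blockSeq, j.isLt]

theorem Kmat_mulVec_apply (a b : ℕ → Matrix (Fin m) (Fin m) ℂ) (τ : ℂ)
    (f : Fin p × Fin m → ℂ) (j : Fin p) (i : Fin m) :
    (Kmat p m a b τ *ᵥ f) (j, i) =
      (b (j + 1) *ᵥ blockSeq f (j + 1) + a (j + 1) *ᵥ blockSeq f (j + 2)
        + a j *ᵥ blockSeq f j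
        + (if (j : ℕ) = 0 then τ⁻¹ • a p *ᵥ blockSeq f p else 0)
        + (if (j : ℕ) + 1 = p then τ • a p *ᵥ blockSeq f 1 else 0)) i := by
  have hj := j.isLt
  simp only [Matrix.mulVec, dotProduct, Kmat, Matrix.of_apply, Fintype.sum_prod_type, add_mul,
    ite_mul, zero_mul, Finset.sum_add_distrib, ← blockSeq_val_add_one f, Finset.sum_ite_irrel,
    Finset.sum_const_zero, ite_and, Fin.val_inj, Finset.sum_ite_eq, Finset.mem_univ, if_true]
  rw [Fin.sum_ite_val_eq (↑j + 1) (fun k => ∑ l, a (↑j + 1) i l * blockSeq f (k + 1) l)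
      (fun _ => by simp [blockSeq_of_lt f (by omega : p < ↑j + 1 + 1)]),
    Fin.sum_ite_eq_val_add_one (↑j) (fun n => ∑ l, a n i l * blockSeq f n l) (by simp) hj.le,
    Fin.sum_ite_val_eq (p - 1) (fun k => ∑ l, τ⁻¹ * a p i l * blockSeq f (k + 1) l) (by omega),
    Fin.sum_ite_val_eq 0 (fun k => ∑ l, τ * a p i l * blockSeq f (k + 1) l) (by omega)]
  simp only [Nat.sub_add_cancel (by omega : 1 ≤ p),
    show ((j : ℕ) = p - 1) ↔ ((j : ℕ) + 1 = p) by omega]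
  split_ifs <;> simp [Matrix.mulVec, dotProduct, Finset.mul_sum, mul_assoc]

/-- The sequence `f_0, f_1, …, f_p, f_{p+1}` with `f_0 = τ⁻¹ f_p` and `f_{p+1} = τ f_1`. -/
noncomputable def floquetSeq (τ : ℂ) (f : Fin p × Fin m → ℂ) (n : ℕ) : Fin m → ℂ :=
  if n = 0 then τ⁻¹ • blockSeq f p else if n = p + 1 then τ • blockSeq f 1 else blockSeq f n

@[simp] theorem floquetSeq_zero (τ : ℂ) (f : Fin p × Fin m → ℂ) :
    floquetSeq τ f 0 = τ⁻¹ • blockSeq f p := by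
  simp [floquetSeq]

@[simp] theorem floquetSeq_add_one (τ : ℂ) (f : Fin p × Fin m → ℂ) :
    floquetSeq τ f (p + 1) = τ • blockSeq f 1 := by
  simp [floquetSeq]

theorem floquetSeq_of_pos_of_le (τ : ℂ) (f : Fin p × Fin m → ℂ) {n : ℕ} (h₀ : 0 < n)
    (hp : n ≤ p) : floquetSeq τ f n = blockSeq f n := by
  rw [floquetSeq, if_neg (by omega), if_neg (by omega)]

theorem floquetSeq_val_add_one (τ : ℂ) (f : Fin p × Fin m → ℂ) (j : Fin p) (i : Fin m) :
    floquetSeq τ f (j + 1) i = f (j, i) := by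
  rw [floquetSeq_of_pos_of_le τ f (Nat.succ_pos _) j.isLt, blockSeq_val_add_one]

theorem floquetSeq_quasiPeriodic {τ : ℂ} (hτ : τ ≠ 0) (hp : 0 < p) (f : Fin p × Fin m → ℂ) :
    Sum.elim (floquetSeq τ f p) (floquetSeq τ f (p + 1))
      = τ • Sum.elim (floquetSeq τ f 0) (floquetSeq τ f 1) := by
  funext x
  rcases x with i | i
  · simp [floquetSeq_of_pos_of_le τ f hp le_rfl, hτ]
  · simp [floquetSeq_of_pos_of_le τ f one_pos hp]

theorem extract_eq_sum_elim_floquetSeq (hp : 2 ≤ p) (τ : ℂ) (f : Fin p × Fin m → ℂ) :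
    extract p m hp τ f = Sum.elim (floquetSeq τ f 0) (floquetSeq τ f 1) := by
  funext x
  rcases x with i | i
  · simp [extract, blockSeq, show 0 < p by omega]
  · simp [extract, floquetSeq_of_pos_of_le τ f one_pos (by omega : 1 ≤ p), blockSeq,
      show p ≠ 0 by omega]

theorem isJacobiSolution_floquetSeq {a b : ℕ → Matrix (Fin m) (Fin m) ℂ} (hap : a p = a 0)
    {τ lam : ℂ} {f : Fin p × Fin m → ℂ} (hf : Kmat p m a b τ *ᵥ f = lam • f) :
    IsJacobiSolution a b lam p (floquetSeq τ f) := by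
  intro n hn
  funext i
  have hrow := Kmat_mulVec_apply a b τ f ⟨n, hn⟩ i
  rw [hf, Pi.smul_apply, ← blockSeq_val_add_one f] at hrow
  have h₂ : floquetSeq τ f (n + 2)
      = blockSeq f (n + 2) + if n + 1 = p then τ • blockSeq f 1 else 0 := by
    by_cases h : n + 1 = p
    · simp [floquetSeq, h, blockSeq_of_lt f (by omega : p < n + 2)]
    · simp [floquetSeq, h, show n + 2 ≠ p + 1 by omega]
  have h₀ : floquetSeq τ f n = blockSeq f n + if n = 0 then τ⁻¹ • blockSeq f p else 0 := by
    by_cases h : n = 0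
    · simp [floquetSeq, h]
    · simp [floquetSeq, h, show n ≠ p + 1 by omega]
  have h₃ : a (n + 1) *ᵥ (if n + 1 = p then τ • blockSeq f 1 else 0)
      = if n + 1 = p then τ • a p *ᵥ blockSeq f 1 else 0 := by
    split_ifs with h
    · rw [h, Matrix.mulVec_smul]
    · exact Matrix.mulVec_zero _
  have h₄ : a n *ᵥ (if n = 0 then τ⁻¹ • blockSeq f p else 0)
      = if n = 0 then τ⁻¹ • a p *ᵥ blockSeq f p else 0 := by
    split_ifs with h
    · rw [h, ← hap, Matrix.mulVec_smul]
    · exact Matrix.mulVec_zero _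
  rw [floquetSeq_of_pos_of_le τ f (by omega : 0 < n + 1) hn, Pi.smul_apply, hrow, h₂, h₀,
    Matrix.mulVec_add, Matrix.mulVec_add, h₃, h₄]
  exact congrFun (by abel) i

end Floquet

theorem stmt10_general (m p : ℕ) (hp : 2 ≤ p)
    (a b : ℕ → Matrix (Fin m) (Fin m) ℂ)
    (hper : ∀ n, a (n + p) = a n ∧ b (n + p) = b n)
    (ha : ∀ n, (a n).PosDef)
    (τ : ℂ) (hτ : τ ≠ 0) (lam : ℂ)
    (f : Fin p × Fin m → ℂ)
    (hf : (Kmat p m a b τ).mulVec f = lam • f) :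
    (Mmat p a b lam).mulVec (extract p m hp τ f) = τ • extract p m hp τ f ∧
    (∀ f' : Fin p × Fin m → ℂ, (Kmat p m a b τ).mulVec f' = lam • f' →
      extract p m hp τ f' = extract p m hp τ f → f' = f) ∧
    (f ≠ 0 → extract p m hp τ f ≠ 0) := by
  have hap : a p = a 0 := by simpa using (hper 0).1
  have hunit : ∀ n, IsUnit (a n) := fun n => (ha n).isUnit
  have hsol := isJacobiSolution_floquetSeq hap hf
  have hinj : ∀ f' : Fin p × Fin m → ℂ, Kmat p m a b τ *ᵥ f' = lam • f' →
      extract p m hp τ f' = extract p m hp τ f → f' = f := by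
    intro f' hf' hext
    simp only [extract_eq_sum_elim_floquetSeq, Sum.elim_eq_iff] at hext
    funext ⟨j, i⟩
    rw [← floquetSeq_val_add_one τ f', ← floquetSeq_val_add_one τ f,
      (isJacobiSolution_floquetSeq hap hf').eq_of_initial_eq hunit hsol hext.1 hext.2
        (by have := j.isLt; omega)]
  refine ⟨?_, hinj, fun hf₀ hext₀ => hf₀ (hinj 0 (by simp) ?_).symm⟩
  · rw [extract_eq_sum_elim_floquetSeq, hsol.Mmat_mulVec_sum_elim hunit,
      floquetSeq_quasiPeriodic hτ (by omega)]
  · rw [hext₀]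
    funext x
    cases x <;> simp [extract]

/-- Let `τ ∈ ℂ ∖ {0}`, `lam ∈ ℂ`, and let `f = (f_1, …, f_p) ∈ (ℂ^m)^p`
satisfy `K_p(τ) f = lam f`.  Set `f_0 = τ⁻¹ f_p`.  Then the vector `(f_0, f_1) ∈ ℂ^{2m}`
satisfies `M_p(lam) (f_0, f_1)ᵀ = τ (f_0, f_1)ᵀ`.  Moreover, the linear map sending `f` to
`(f_0, f_1)` is injective on the `lam`-eigenspace of `K_p(τ)`; in particular, if `f ≠ 0`
then `(f_0, f_1) ≠ 0`. -/
theorem stmt10 (m p : ℕ) (hm : 1 ≤ m) (hp : 2 ≤ p)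
    (a b : ℕ → Matrix (Fin m) (Fin m) ℂ)
    (hper : ∀ n, a (n + p) = a n ∧ b (n + p) = b n)
    (ha : ∀ n, (a n).PosDef) (hb : ∀ n, (b n).IsHermitian)
    (τ : ℂ) (hτ : τ ≠ 0) (lam : ℂ)
    (f : Fin p × Fin m → ℂ)
    (hf : (Kmat p m a b τ).mulVec f = lam • f) :
    (Mmat p a b lam).mulVec (extract p m hp τ f) = τ • extract p m hp τ f ∧
    (∀ f' : Fin p × Fin m → ℂ, (Kmat p m a b τ).mulVec f' = lam • f' →
      extract p m hp τ f' = extract p m hp τ f → f' = f) ∧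
    (f ≠ 0 → extract p m hp τ f ≠ 0) :=
  stmt10_general m p hp a b hper ha τ hτ lam f hf
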